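/- arXiv:0704.2081 — 2 statements merged into one kernel-verified Lean document; each statement's English description precedes it below -/
import Mathlib

section
/- Define h(x,y) = (x+y+1)(3(x+y)−2) − 2(x²+y²+1)(x+y). Then h(x,y) < 0 for all x, y ≥ 0 with x + y > 3, and also for all x, y ≥ 0 with x + y < 1. -/
/-! Writing `s = x + y`, the bound `x² + y² ≥ s²/2` gives
`h(x, y) ≤ -s³ + 3s² - s - 2 = -(s - 2)(s² - s - 1)` for `s ≥ 0`. For `s > 3` both factors
`s - 2` and `s² - s - 1` are positive; for `0 ≤ s < 1` both are negative. -/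

lemma pinching_le_cubic (x y : ℝ) (hs : 0 ≤ x + y) :
    (x+y+1)*(3*(x+y)-2) - 2*(x^2+y^2+1)*(x+y) ≤ -((x + y) - 2) * ((x + y)^2 - (x + y) - 1) := by
  have hsq : (x + y)^2 ≤ 2 * (x^2 + y^2) := by nlinarith [sq_nonneg (x - y)]
  nlinarith [mul_le_mul_of_nonneg_right hsq hs]

lemma cubic_neg_of_three_lt {s : ℝ} (hs : 3 < s) : -(s - 2) * (s^2 - s - 1) < 0 := by
  have hquad : 0 < s^2 - s - 1 := by nlinarith
  linarith [mul_pos (sub_pos.mpr (by linarith : (2:ℝ) < s)) hquad]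

lemma cubic_neg_of_nonneg_of_lt_one {s : ℝ} (hs₀ : 0 ≤ s) (hs₁ : s < 1) :
    -(s - 2) * (s^2 - s - 1) < 0 := by
  have hquad : s^2 - s - 1 < 0 := by nlinarith
  linarith [mul_pos_of_neg_of_neg (sub_neg.mpr (by linarith : s < 2)) hquad]

theorem stmt_7 (x y : ℝ) (hx : 0 ≤ x) (hy : 0 ≤ y) :
    (x + y > 3 ∨ x + y < 1) →
    (x+y+1)*(3*(x+y)-2) - 2*(x^2+y^2+1)*(x+y) < 0 := by
  have hs : 0 ≤ x + y := add_nonneg hx hy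
  refine fun h => (pinching_le_cubic x y hs).trans_lt ?_
  rcases h with h | h
  · exact cubic_neg_of_three_lt h
  · exact cubic_neg_of_nonneg_of_lt_one hs h
end

section
/- Let λ, μ, ν > 0 and define E(λ,μ,ν) = ν(λ+μ+ν)[3(λ+μ) − 2ν] − 2(λ+μ)(λ²+μ²+ν²). There exists ρ > 0 such that whenever λ + μ < ρν, one has E(λ,μ,ν) < 0. -/
/-- `E(λ, μ, ν)`, the normal derivative of the pinching function up to a positive factor. -/
def pinchingNormalDeriv (l m n : ℝ) : ℝ :=
  n * (l + m + n) * (3 * (l + m) - 2 * n) - 2 * (l + m) * (l ^ 2 + m ^ 2 + n ^ 2)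

theorem pinchingNormalDeriv_neg_of_three_mul_lt {l m n : ℝ} (hlm : 0 ≤ l + m) (hn : 0 < n)
    (h : 3 * (l + m) < 2 * n) : pinchingNormalDeriv l m n < 0 := by
  have hfirst : n * (l + m + n) * (3 * (l + m) - 2 * n) < 0 :=
    mul_neg_of_pos_of_neg (mul_pos hn (by linarith)) (by linarith)
  have hsecond : 0 ≤ 2 * (l + m) * (l ^ 2 + m ^ 2 + n ^ 2) :=
    mul_nonneg (mul_nonneg zero_le_two hlm) (by positivity)
  unfold pinchingNormalDeriv
  linarith

theorem stmt_9 :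
    ∃ ρ > (0:ℝ), ∀ l m n : ℝ, 0 < l → 0 < m → 0 < n → l + m < ρ * n →
      n*(l+m+n)*(3*(l+m) - 2*n) - 2*(l+m)*(l^2+m^2+n^2) < 0 := by
  refine ⟨2 / 3, by norm_num, fun l m n hl hm hn h => ?_⟩
  exact pinchingNormalDeriv_neg_of_three_mul_lt (by linarith) hn (by linarith)
end
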